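/- arXiv:math/0410610 — 3 statements merged into one kernel-verified Lean document; each statement's English description precedes it below -/
import Mathlib

section
/- On ℝ⁶ with the standard SU(3)-structure forms, let u(3)^⊥ denote the space of alternating 2-forms β on ℝ⁶ satisfying β(Ix, Iy) = −β(x, y) for all x, y. Then the linear maps Ξ₊ and Ξ₋ from alternating 2-forms to alternating 3-forms defined by Ξ₊(β) = (1/2) Σ_{i=1}^{6} (e_i ⌟ β) ∧ (e_i ⌟ ψ₋) and Ξ₋(β) = −(1/2) Σ_{i=1}^{6} (e_i ⌟ β) ∧ (e_i ⌟ ψ₊) are both injective when restricted to u(3)^⊥, and the image of u(3)^⊥ under each of Ξ₊ and Ξ₋ equals the subspace {μ ∧ ω : μ an ℝ-linear 1-form on ℝ⁶} of alternating 3-forms. -/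
/-!
Every `β ∈ u(3)^⊥` is a contraction `a ⌟ ψ₊` with `a ∈ ℝ⁶`, and conversely every such
contraction lies in `u(3)^⊥`. A direct computation gives `Ξ₊(a ⌟ ψ₊) = -a♭ ∧ ω` and
`Ξ₋(a ⌟ ψ₊) = -(Ia)♭ ∧ ω`. Since `a ↦ a♭` and `I` are bijective and `μ ↦ μ ∧ ω` is injective on
1-forms (contracting `μ ∧ ω` with `ω` gives back `-4μ`), both `Ξ₊` and `Ξ₋` map `u(3)^⊥`
bijectively onto `{μ ∧ ω}`.
-/

open scoped BigOperators

noncomputable section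

/-- ℝ⁶ as the space of functions `Fin 6 → ℝ`. -/
abbrev V6 : Type := Fin 6 → ℝ

/-- The standard inner product on ℝ⁶. -/
def ip6 (x y : V6) : ℝ := ∑ i, x i * y i

/-- The standard orthonormal basis vector `e_i`. -/
def e6 (i : Fin 6) : V6 := fun j => if j = i then 1 else 0

/-- The orthogonal complex structure: `I e_k = e_{k+3}`, `I e_{k+3} = -e_k` (0-indexed). -/
def I6 (x : V6) : V6 := fun j => if (j : ℕ) < 3 then -x (j + 3) else x (j + 3)

/-- The Kähler form `ω(x,y) = ⟨x, I y⟩`. -/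
def ω6 (x y : V6) : ℝ := ip6 x (I6 y)

/-- The basis covector `eⁱ`. -/
def E (i : Fin 6) : V6 → ℝ := fun x => x i

/-- Wedge product of three covectors (determinant convention). -/
def w3 (a b c : V6 → ℝ) (x y z : V6) : ℝ :=
  a x * b y * c z - a x * b z * c y - a y * b x * c z
    + a y * b z * c x + a z * b x * c y - a z * b y * c x

/-- `ψ₊ = e¹∧e²∧e³ − e⁴∧e⁵∧e³ − e⁴∧e²∧e⁶ − e¹∧e⁵∧e⁶` (0-indexed). -/
def ψp (x y z : V6) : ℝ :=
  w3 (E 0) (E 1) (E 2) x y z - w3 (E 3) (E 4) (E 2) x y z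
    - w3 (E 3) (E 1) (E 5) x y z - w3 (E 0) (E 4) (E 5) x y z

/-- `ψ₋ = −e⁴∧e⁵∧e⁶ + e⁴∧e²∧e³ + e¹∧e⁵∧e³ + e¹∧e²∧e⁶` (0-indexed). -/
def ψm (x y z : V6) : ℝ :=
  -w3 (E 3) (E 4) (E 5) x y z + w3 (E 3) (E 1) (E 2) x y z
    + w3 (E 0) (E 4) (E 2) x y z + w3 (E 0) (E 1) (E 5) x y z

/-- `u(3)^⊥`: alternating 2-forms `β` with `β(Ix,Iy) = −β(x,y)`. -/
def u3perp : Set (AlternatingMap ℝ V6 ℝ (Fin 2)) :=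
  {β | ∀ x y : V6, β ![I6 x, I6 y] = -β ![x, y]}

/-- `Ξ₊(β) = (1/2) ∑ᵢ (eᵢ ⌟ β) ∧ (eᵢ ⌟ ψ₋)`. -/
def Ξp (β : AlternatingMap ℝ V6 ℝ (Fin 2)) : V6 → V6 → V6 → ℝ :=
  fun x y z => (1 / 2 : ℝ) * ∑ i : Fin 6,
    (β ![e6 i, x] * ψm (e6 i) y z - β ![e6 i, y] * ψm (e6 i) x z
      + β ![e6 i, z] * ψm (e6 i) x y)

/-- `Ξ₋(β) = −(1/2) ∑ᵢ (eᵢ ⌟ β) ∧ (eᵢ ⌟ ψ₊)`. -/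
def Ξm (β : AlternatingMap ℝ V6 ℝ (Fin 2)) : V6 → V6 → V6 → ℝ :=
  fun x y z => -(1 / 2 : ℝ) * ∑ i : Fin 6,
    (β ![e6 i, x] * ψp (e6 i) y z - β ![e6 i, y] * ψp (e6 i) x z
      + β ![e6 i, z] * ψp (e6 i) x y)

/-- The space `{μ ∧ ω : μ a 1-form}` of 3-forms, where
`(μ ∧ ω)(x,y,z) = μ(x)ω(y,z) − μ(y)ω(x,z) + μ(z)ω(x,y)`. -/
def oneFormWedgeOmega : Set (V6 → V6 → V6 → ℝ) :=
  {γ | ∃ μ : V6 →ₗ[ℝ] ℝ,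
    γ = fun x y z => μ x * ω6 y z - μ y * ω6 x z + μ z * ω6 x y}

namespace AlternatingMap

variable {R M N : Type*} [CommRing R] [AddCommGroup M] [Module R M] [AddCommGroup N] [Module R N]

lemma map_fin_two_swap (β : M [⋀^Fin 2]→ₗ[R] N) (u w : M) : β ![w, u] = -β ![u, w] := by
  rw [← β.map_swap ![u, w] Fin.zero_ne_one]
  congr 1
  ext i
  fin_cases i <;> rfl

lemma map_fin_two_neg_left (β : M [⋀^Fin 2]→ₗ[R] N) (u w : M) : β ![-u, w] = -β ![u, w] := by
  have hupdate (x : M) : Function.update ![u, w] 0 x = ![x, w] := by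
    ext i; fin_cases i <;> simp
  simpa only [hupdate] using β.map_update_neg ![u, w] 0 u

lemma map_fin_two_neg_right (β : M [⋀^Fin 2]→ₗ[R] N) (u w : M) : β ![u, -w] = -β ![u, w] := by
  have hupdate (x : M) : Function.update ![u, w] 1 x = ![u, x] := by
    ext i; fin_cases i <;> simp
  simpa only [hupdate] using β.map_update_neg ![u, w] 1 w

end AlternatingMap

lemma e6_apply (i j : Fin 6) : e6 i j = if j = i then 1 else 0 := rfl

lemma e6_eq_single (i : Fin 6) : e6 i = Pi.single i 1 := by
  funext j
  simp [e6, Pi.single_apply]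

lemma apply_eq_sum_e6 (μ : V6 →ₗ[ℝ] ℝ) (x : V6) : μ x = ∑ k, x k * μ (e6 k) := by
  rw [μ.pi_apply_eq_sum_univ x]
  refine Finset.sum_congr rfl fun k _ => ?_
  rw [smul_eq_mul]
  congr 2
  ext j
  exact if_congr eq_comm rfl rfl

lemma I6_e6 (i : Fin 6) : I6 (e6 i) = if (i : ℕ) < 3 then e6 (i + 3) else -e6 (i + 3) := by
  fin_cases i <;> funext j <;> fin_cases j <;> simp [I6, e6]

lemma I6_I6 (x : V6) : I6 (I6 x) = -x := by
  funext j
  fin_cases j <;> simp [I6]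

lemma I6_neg (x : V6) : I6 (-x) = -I6 x := by
  funext j
  fin_cases j <;> simp [I6]

lemma I6_bijective : Function.Bijective I6 :=
  Function.bijective_iff_has_inverse.mpr
    ⟨fun x => -I6 x, fun x => by simp [I6_I6], fun x => by simp [I6_neg, I6_I6]⟩

def basisWedge (i j k : Fin 6) : V6 [⋀^Fin 3]→ₗ[ℝ] ℝ :=
  (Matrix.detRowAlternating : (Fin 3 → ℝ) [⋀^Fin 3]→ₗ[ℝ] ℝ).compLinearMap
    (LinearMap.funLeft ℝ ℝ ![i, j, k])

lemma basisWedge_apply (i j k : Fin 6) (x y z : V6) :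
    basisWedge i j k ![x, y, z] = w3 (E i) (E j) (E k) x y z := by
  change Matrix.det (Matrix.of fun r c => ![x, y, z] r (![i, j, k] c)) = _
  rw [Matrix.det_fin_three]
  simp only [Matrix.of_apply, Matrix.cons_val', Matrix.cons_val_fin_one, Matrix.cons_val_zero,
    Matrix.cons_val_one, Matrix.cons_val, w3, E]
  ring

def psiPlus : V6 [⋀^Fin 3]→ₗ[ℝ] ℝ :=
  basisWedge 0 1 2 - basisWedge 3 4 2 - basisWedge 3 1 5 - basisWedge 0 4 5

lemma psiPlus_apply (x y z : V6) : psiPlus ![x, y, z] = ψp x y z := by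
  simp only [psiPlus, AlternatingMap.sub_apply, basisWedge_apply, ψp]

lemma curryLeft_psiPlus_mem_u3perp (a : V6) : psiPlus.curryLeft a ∈ u3perp := by
  intro x y
  simp only [AlternatingMap.curryLeft_apply_apply, psiPlus_apply]
  simp [ψp, w3, E, I6]
  ring

/-- On each of these six pairs `(eᵢ, eⱼ)`, `ψ₊(a, eᵢ, eⱼ)` is `±a_k` for a single `k`. -/
def psiPlusVec (β : V6 [⋀^Fin 2]→ₗ[ℝ] ℝ) : V6 :=
  ![β ![e6 1, e6 2], -β ![e6 0, e6 2], β ![e6 0, e6 1], -β ![e6 1, e6 5], β ![e6 0, e6 5],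
    -β ![e6 0, e6 4]]

lemma eq_curryLeft_psiPlusVec {β : V6 [⋀^Fin 2]→ₗ[ℝ] ℝ} (hβ : β ∈ u3perp) :
    β = psiPlus.curryLeft (psiPlusVec β) := by
  refine (Pi.basisFun ℝ (Fin 6)).ext_alternating fun v _ => ?_
  have hv : (fun i => Pi.basisFun ℝ (Fin 6) (v i)) = ![e6 (v 0), e6 (v 1)] := by
    ext i : 1
    fin_cases i <;> simp [e6_eq_single]
  rw [hv]
  generalize v 0 = i, v 1 = j
  -- `I` maps `e (i + 3)` to `± e i`, so anti-invariance ties `β (eᵢ, eⱼ)` to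
  -- `β (e (i + 3), e (j + 3))`; one of these two pairs, up to order, is read off by `psiPlusVec`,
  -- unless `j = i` or `j = i + 3`, where the entry is forced to vanish.
  have hswap := β.map_fin_two_swap (e6 i) (e6 j)
  have hI := hβ (e6 (i + 3)) (e6 (j + 3))
  have hswap' := β.map_fin_two_swap (e6 (i + 3)) (e6 (j + 3))
  simp only [AlternatingMap.curryLeft_apply_apply, psiPlus_apply, psiPlusVec]
  fin_cases i <;> fin_cases j <;>
    simp [ψp, w3, E, e6_apply, I6_e6, AlternatingMap.map_fin_two_neg_left,
      AlternatingMap.map_fin_two_neg_right] at hswap hI hswap' ⊢ <;>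
    linarith

lemma u3perp_eq_range : u3perp = Set.range psiPlus.curryLeft :=
  Set.Subset.antisymm (fun _ hβ => ⟨_, (eq_curryLeft_psiPlusVec hβ).symm⟩)
    (Set.range_subset_iff.mpr curryLeft_psiPlus_mem_u3perp)

def wedgeOmega (μ : V6 →ₗ[ℝ] ℝ) : V6 → V6 → V6 → ℝ :=
  fun x y z => μ x * ω6 y z - μ y * ω6 x z + μ z * ω6 x y

lemma oneFormWedgeOmega_eq_range : oneFormWedgeOmega = Set.range wedgeOmega :=
  Set.ext fun _ => exists_congr fun _ => eq_comm

lemma sum_wedgeOmega_e6_I6 (μ : V6 →ₗ[ℝ] ℝ) (x : V6) :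
    ∑ j, wedgeOmega μ x (e6 j) (I6 (e6 j)) = -4 * μ x := by
  simp only [wedgeOmega]
  rw [apply_eq_sum_e6 μ x]
  simp [Fin.sum_univ_six, I6_e6, ω6, ip6, I6, e6_apply]
  ring

lemma wedgeOmega_injective : Function.Injective wedgeOmega := by
  intro μ ν h
  refine LinearMap.ext fun x => ?_
  have hμ := sum_wedgeOmega_e6_I6 μ x
  have hν := sum_wedgeOmega_e6_I6 ν x
  rw [h] at hμ
  linarith

lemma Ξp_curryLeft_psiPlus (a : V6) :
    Ξp (psiPlus.curryLeft a) = wedgeOmega (-dotProductEquiv ℝ (Fin 6) a) := by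
  funext x y z
  simp [Ξp, wedgeOmega, Fin.sum_univ_six, psiPlus_apply, ψp, ψm, w3, E, e6, ω6, ip6, I6,
    dotProduct]
  ring

lemma Ξm_curryLeft_psiPlus (a : V6) :
    Ξm (psiPlus.curryLeft a) = wedgeOmega (-dotProductEquiv ℝ (Fin 6) (I6 a)) := by
  funext x y z
  simp [Ξm, wedgeOmega, Fin.sum_univ_six, psiPlus_apply, ψp, w3, E, e6, ω6, ip6, I6, dotProduct]
  ring

lemma injOn_u3perp_and_image_eq {Ξ : V6 [⋀^Fin 2]→ₗ[ℝ] ℝ → V6 → V6 → V6 → ℝ}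
    {L : V6 → V6 →ₗ[ℝ] ℝ} (hL : Function.Bijective L)
    (hΞ : ∀ a, Ξ (psiPlus.curryLeft a) = wedgeOmega (L a)) :
    Set.InjOn Ξ u3perp ∧ Ξ '' u3perp = oneFormWedgeOmega := by
  rw [u3perp_eq_range, oneFormWedgeOmega_eq_range]
  constructor
  · rintro _ ⟨a, rfl⟩ _ ⟨b, rfl⟩ h
    rw [hΞ, hΞ] at h
    rw [hL.injective (wedgeOmega_injective h)]
  · rw [← Set.range_comp, show Ξ ∘ psiPlus.curryLeft = wedgeOmega ∘ L from funext hΞ,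
      Set.range_comp, hL.surjective.range_eq, Set.image_univ]

/-- `Ξ₊` and `Ξ₋` are injective on `u(3)^⊥` and map it onto `{μ ∧ ω}`. -/
theorem Xi_injective_image :
    Set.InjOn Ξp u3perp ∧ Set.InjOn Ξm u3perp ∧
    Ξp '' u3perp = oneFormWedgeOmega ∧ Ξm '' u3perp = oneFormWedgeOmega := by
  obtain ⟨injOn_plus, image_plus⟩ := injOn_u3perp_and_image_eq
    (neg_involutive.bijective.comp (dotProductEquiv ℝ (Fin 6)).bijective) Ξp_curryLeft_psiPlus
  obtain ⟨injOn_minus, image_minus⟩ := injOn_u3perp_and_image_eq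
    ((neg_involutive.bijective.comp (dotProductEquiv ℝ (Fin 6)).bijective).comp I6_bijective)
    Ξm_curryLeft_psiPlus
  exact ⟨injOn_plus, injOn_minus, image_plus, image_minus⟩
end
end

section
/- On ℝ⁷ with the standard G₂ 3-form φ, its Hodge dual 4-form ∗φ, and associated cross product P, for all vectors x, y, z, u ∈ ℝ⁷: ⟨P(x,y), P(z,u)⟩ = ⟨x,z⟩⟨y,u⟩ − ⟨x,u⟩⟨y,z⟩ − ∗φ(x,y,z,u); consequently the cyclic sum over (y,z,u) of ⟨P(x,y), P(z,u)⟩ equals −3 ∗φ(x,y,z,u). -/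
/-!
Since `⟨P(x,y), e_k⟩ = φ(x,y,e_k)`, the cross product is forced to be the explicit bilinear map
`cross7`, and the first identity becomes a polynomial identity in the coordinates of `x, y, z, u`.
In the cyclic sum the metric terms cancel pairwise, while `∗φ`, being alternating, is invariant
under the even permutation `(y z u)` of its last three arguments.
-/

open scoped BigOperators

noncomputable section

/-- ℝ⁷ as the space of functions `Fin 7 → ℝ` (indices in ℤ/7ℤ). -/
abbrev V7 : Type := Fin 7 → ℝ

/-- The standard inner product on ℝ⁷. -/
def ip7 (x y : V7) : ℝ := ∑ i, x i * y i

/-- The standard orthonormal basis vector `e_i`. -/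
def e7 (i : Fin 7) : V7 := fun j => if j = i then 1 else 0

/-- The G₂ fundamental 3-form `φ = ∑_{i∈ℤ/7} eⁱ ∧ e^{i+1} ∧ e^{i+3}`
(each wedge of covectors in the determinant convention). -/
def φ7 (x y z : V7) : ℝ :=
  ∑ i : Fin 7,
    (x i * y (i + 1) * z (i + 3) - x i * y (i + 3) * z (i + 1)
      - x (i + 1) * y i * z (i + 3) + x (i + 1) * y (i + 3) * z i
      + x (i + 3) * y i * z (i + 1) - x (i + 3) * y (i + 1) * z i)

/-- The 4-form `∗φ = −∑_{i∈ℤ/7} e^{i+2} ∧ e^{i+4} ∧ e^{i+5} ∧ e^{i+6}`. -/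
def sφ7 (x y z u : V7) : ℝ :=
  -∑ i : Fin 7,
    Matrix.det !![x (i + 2), x (i + 4), x (i + 5), x (i + 6);
                  y (i + 2), y (i + 4), y (i + 5), y (i + 6);
                  z (i + 2), z (i + 4), z (i + 5), z (i + 6);
                  u (i + 2), u (i + 4), u (i + 5), u (i + 6)]

lemma Matrix.det_fin_four_of {R : Type*} [CommRing R] (a b c d e f g h i j k l m n o p : R) :
    !![a, b, c, d; e, f, g, h; i, j, k, l; m, n, o, p].det
      = a * (f * (k * p - l * o) - g * (j * p - l * n) + h * (j * o - k * n))
        - b * (e * (k * p - l * o) - g * (i * p - l * m) + h * (i * o - k * m))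
        + c * (e * (j * p - l * n) - f * (i * p - l * m) + h * (i * n - j * m))
        - d * (e * (j * o - k * n) - f * (i * o - k * m) + g * (i * n - j * m)) := by
  simp [Matrix.det_succ_row_zero, Fin.sum_univ_succ, Fin.succAbove]
  ring

lemma ip7_comm (x y : V7) : ip7 x y = ip7 y x := by
  simp only [ip7, mul_comm]

lemma ip7_e7 (v : V7) (k : Fin 7) : ip7 v (e7 k) = v k := by
  simp [ip7, e7]

def cross7 (x y : V7) : V7 := fun k => φ7 x y (e7 k)

lemma eq_cross7_of_ip7_eq_φ7 {P : V7 → V7 → V7} (hP : ∀ x y z : V7, ip7 (P x y) z = φ7 x y z) :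
    P = cross7 := by
  funext x y k
  rw [← ip7_e7 (P x y), hP]
  rfl

lemma ip7_cross7_cross7 (x y z u : V7) :
    ip7 (cross7 x y) (cross7 z u)
      = ip7 x z * ip7 y u - ip7 x u * ip7 y z - sφ7 x y z u := by
  simp only [cross7, φ7, e7, ip7, sφ7, Fin.sum_univ_seven, Matrix.det_fin_four_of,
    Fin.reduceAdd, Fin.reduceEq, reduceIte,
    mul_zero, mul_one, add_zero, sub_zero, zero_sub]
  ring

lemma sφ7_rotate (x y z u : V7) : sφ7 x z u y = sφ7 x y z u := by
  simp only [sφ7, Fin.sum_univ_seven, Matrix.det_fin_four_of, Fin.reduceAdd]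
  ring

lemma cyclic_sum_ip7_cross7 (x y z u : V7) :
    ip7 (cross7 x y) (cross7 z u) + ip7 (cross7 x z) (cross7 u y)
        + ip7 (cross7 x u) (cross7 y z)
      = -3 * sφ7 x y z u := by
  rw [ip7_cross7_cross7, ip7_cross7_cross7, ip7_cross7_cross7, sφ7_rotate x u y z,
    sφ7_rotate, ip7_comm u y, ip7_comm z y, ip7_comm u z]
  ring

/-- `⟨P(x,y), P(z,u)⟩ = ⟨x,z⟩⟨y,u⟩ − ⟨x,u⟩⟨y,z⟩ − ∗φ(x,y,z,u)`, and consequently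
the cyclic sum over `(y,z,u)` equals `−3 ∗φ(x,y,z,u)`. -/
theorem cross_product_inner (P : V7 → V7 → V7)
    (hP : ∀ x y z : V7, ip7 (P x y) z = φ7 x y z) :
    ∀ x y z u : V7,
      ip7 (P x y) (P z u)
          = ip7 x z * ip7 y u - ip7 x u * ip7 y z - sφ7 x y z u ∧
      ip7 (P x y) (P z u) + ip7 (P x z) (P u y) + ip7 (P x u) (P y z)
          = -3 * sφ7 x y z u := by
  obtain rfl := eq_cross7_of_ip7_eq_φ7 hP
  exact fun x y z u => ⟨ip7_cross7_cross7 x y z u, cyclic_sum_ip7_cross7 x y z u⟩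
end
end

section
/- On ℝ⁷ with the standard G₂ 4-form ∗φ, for all vectors x, y ∈ ℝ⁷: ⟨x ⌟ ∗φ, y ⌟ ∗φ⟩ = 4⟨x, y⟩, where the inner product of two alternating 3-forms a, b is ⟨a,b⟩ = (1/3!) Σ_{i,j,k∈ℤ/7} a(e_i,e_j,e_k) b(e_i,e_j,e_k). (This is the key identity making the paper's map r̄(α)(x,y) = (1/4)⟨x⌟α, y⌟∗φ⟩ a G₂-isomorphism.) -/
/-!
Both sides are bilinear in `(x, y)`, so the identity says that the `7 × 7³` matrix `M` of
components `∗φ(e_a, e_i, e_j, e_k)` satisfies `M Mᵀ = 24 I`. Combinatorially, the terms of `∗φ`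
are indexed by the complements of the lines of the Fano plane: two such 4-sets never share
three elements, and each index lies in four of them, each contributing `3!` ordered triples
`(i, j, k)`. The integer identity `M Mᵀ = 24 I` is verified by evaluation in the kernel.
-/

open scoped BigOperators

noncomputable section

open Matrix

theorem Matrix.det_fin_four {R : Type*} [CommRing R] (A : Matrix (Fin 4) (Fin 4) R) :
    A.det =
      A 0 0 * (A 1 1 * (A 2 2 * A 3 3 - A 2 3 * A 3 2) - A 1 2 * (A 2 1 * A 3 3 - A 2 3 * A 3 1)
          + A 1 3 * (A 2 1 * A 3 2 - A 2 2 * A 3 1))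
      - A 0 1 * (A 1 0 * (A 2 2 * A 3 3 - A 2 3 * A 3 2) - A 1 2 * (A 2 0 * A 3 3 - A 2 3 * A 3 0)
          + A 1 3 * (A 2 0 * A 3 2 - A 2 2 * A 3 0))
      + A 0 2 * (A 1 0 * (A 2 1 * A 3 3 - A 2 3 * A 3 1) - A 1 1 * (A 2 0 * A 3 3 - A 2 3 * A 3 0)
          + A 1 3 * (A 2 0 * A 3 1 - A 2 1 * A 3 0))
      - A 0 3 * (A 1 0 * (A 2 1 * A 3 2 - A 2 2 * A 3 1) - A 1 1 * (A 2 0 * A 3 2 - A 2 2 * A 3 0)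
          + A 1 2 * (A 2 0 * A 3 1 - A 2 1 * A 3 0)) := by
  rw [det_succ_row_zero]
  simp only [Fin.sum_univ_succ, det_fin_three, submatrix_apply, Fin.succAbove, Fin.isValue,
    Fin.reduceSucc, Fin.reduceCastSucc, Fin.reduceLT, Fin.succ_zero_eq_one, Fin.succ_one_eq_two,
    Fin.castSucc_zero, Fin.castSucc_one, ↓reduceIte, Fin.lt_one_iff, Fin.succ_pos, Fin.reduceEq,
    lt_self_iff_false, not_lt_zero, Fin.val_zero, Fin.val_succ]
  ring

theorem Matrix.vecMul_dotProduct_vecMul {m n R : Type*} [Fintype m] [Fintype n] [DecidableEq m]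
    [CommSemiring R] {A : Matrix m n R} {g : R} (hA : A * Aᵀ = g • 1) (x y : m → R) :
    x ᵥ* A ⬝ᵥ y ᵥ* A = g * (x ⬝ᵥ y) := by
  rw [← dotProduct_mulVec, ← mulVec_transpose, mulVec_mulVec, hA, smul_mulVec, one_mulVec,
    dotProduct_smul, smul_eq_mul]

section StarPhi

variable {R S : Type*} [CommRing R] [CommRing S]

/-- `sφ7` over an arbitrary commutative ring, so that its values on basis vectors can be
computed in `ℤ`. -/
def starPhi (x y z u : Fin 7 → R) : R :=
  -∑ i : Fin 7,
    Matrix.det !![x (i + 2), x (i + 4), x (i + 5), x (i + 6);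
                  y (i + 2), y (i + 4), y (i + 5), y (i + 6);
                  z (i + 2), z (i + 4), z (i + 5), z (i + 6);
                  u (i + 2), u (i + 4), u (i + 5), u (i + 6)]

theorem sφ7_eq_starPhi : sφ7 = starPhi := rfl

def starPhiLinear (y z u : Fin 7 → R) : (Fin 7 → R) →ₗ[R] R where
  toFun x := starPhi x y z u
  map_add' x x' := by
    simp only [starPhi, det_fin_four, of_apply, cons_val, cons_val_zero, cons_val_one,
      Pi.add_apply, ← neg_add, ← Finset.sum_add_distrib]
    congr 1
    exact Finset.sum_congr rfl fun _ _ => by ring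
  map_smul' c x := by
    simp only [starPhi, det_fin_four, of_apply, cons_val, cons_val_zero, cons_val_one,
      Pi.smul_apply, smul_eq_mul, RingHom.id_apply, Finset.mul_sum, mul_neg]
    congr 1
    exact Finset.sum_congr rfl fun _ _ => by ring

theorem starPhi_eq_sum (x y z u : Fin 7 → R) :
    starPhi x y z u = ∑ a, x a * starPhi (Pi.single a 1) y z u :=
  calc starPhi x y z u = starPhiLinear y z u (∑ a, x a • Pi.single a 1) := by
        rw [← pi_eq_sum_univ' x]; rfl
    _ = ∑ a, x a * starPhi (Pi.single a 1) y z u := by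
        simp only [map_sum, map_smul, smul_eq_mul]; rfl

theorem map_starPhi (f : R →+* S) (x y z u : Fin 7 → R) :
    f (starPhi x y z u) = starPhi (f ∘ x) (f ∘ y) (f ∘ z) (f ∘ u) := by
  simp only [starPhi, det_fin_four, of_apply, cons_val, cons_val_zero, cons_val_one, map_neg,
    map_sum, map_sub, map_mul, map_add, Function.comp_apply]

/-- Row `a` lists the components of `e_a ⌟ ∗φ`. -/
def starPhiMatrix (R : Type*) [CommRing R] : Matrix (Fin 7) (Fin 7 × Fin 7 × Fin 7) R :=
  of fun a t => starPhi (Pi.single a 1) (Pi.single t.1 1) (Pi.single t.2.1 1) (Pi.single t.2.2 1)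

theorem starPhiMatrix_int_mul_transpose :
    starPhiMatrix ℤ * (starPhiMatrix ℤ)ᵀ = (24 : ℤ) • 1 := by
  simp only [starPhiMatrix, starPhi, det_fin_four, of_apply, cons_val, cons_val_zero, cons_val_one]
  decide +kernel

theorem map_starPhiMatrix (f : R →+* S) : (starPhiMatrix R).map f = starPhiMatrix S := by
  have single_comp (i : Fin 7) : f ∘ Pi.single i 1 = Pi.single i 1 :=
    funext fun j => by simp [Pi.single_apply, apply_ite f]
  ext a t
  simp only [starPhiMatrix, map_apply, of_apply, map_starPhi, single_comp]

theorem starPhiMatrix_mul_transpose : starPhiMatrix R * (starPhiMatrix R)ᵀ = (24 : R) • 1 := by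
  rw [← map_starPhiMatrix (Int.castRingHom R), ← transpose_map, ← Matrix.map_mul,
    starPhiMatrix_int_mul_transpose]
  ext a b
  simp [one_apply, ofNat_apply]

theorem vecMul_starPhiMatrix (x : Fin 7 → R) :
    x ᵥ* starPhiMatrix R =
      fun t => starPhi x (Pi.single t.1 1) (Pi.single t.2.1 1) (Pi.single t.2.2 1) := by
  funext t
  simp [vecMul, dotProduct, starPhiMatrix, starPhi_eq_sum x]

end StarPhi

/-- `⟨x ⌟ ∗φ, y ⌟ ∗φ⟩ = 4⟨x,y⟩`, where the inner product of 3-forms `a, b` is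
`(1/3!) ∑_{i,j,k} a(e_i,e_j,e_k) b(e_i,e_j,e_k)`. -/
theorem inner_interior_star_phi :
    ∀ x y : V7,
      (1 / 6 : ℝ) * ∑ i : Fin 7, ∑ j : Fin 7, ∑ k : Fin 7,
          sφ7 x (e7 i) (e7 j) (e7 k) * sφ7 y (e7 i) (e7 j) (e7 k)
        = 4 * ip7 x y := by
  intro x y
  have e7_eq : ∀ i, e7 i = Pi.single i 1 := fun i => funext fun j => by simp [e7, Pi.single_apply]
  have hsum : ∑ i, ∑ j, ∑ k, sφ7 x (e7 i) (e7 j) (e7 k) * sφ7 y (e7 i) (e7 j) (e7 k) =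
      x ᵥ* starPhiMatrix ℝ ⬝ᵥ y ᵥ* starPhiMatrix ℝ := by
    simp only [vecMul_starPhiMatrix, dotProduct, Fintype.sum_prod_type, e7_eq, sφ7_eq_starPhi]
  rw [hsum, vecMul_dotProduct_vecMul starPhiMatrix_mul_transpose, ip7, dotProduct]
  ring
end
end
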